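/- arXiv:math/9804101 — 5 statements merged into one kernel-verified Lean document; each statement's English description precedes it below -/
import Mathlib

section
/- Let (p, d, k) be Bratteli-diagram data such that d n i ≥ 1 for all n and all i : Fin (p n), such that Σ_{j : Fin (p n)} (k n i j) * (d n j) ≤ d (n+1) i for all n and all i : Fin (p (n+1)) (all slacks are nonnegative), and such that for every n and every j : Fin (p n) there exists i : Fin (p (n+1)) with k n i j ≥ 1 (the connecting maps are injective). Then there exist Bratteli-diagram data (q, e, l) with q 0 = 1, e 0 ⟨0⟩ = 1, e n i ≥ 1 for all n and i, whose slacks are nonnegative at every level and satisfy σ(n,i) ≤ 1 for every n ≥ 1 and every i : Fin (q n), together with a strictly increasing sequence ν : ℕ → ℕ such that for every m : q (ν m) = p m; e (ν m) i = d m i for every i (under the resulting identification Fin (q (ν m)) = Fin (p m)); and the ordinary matrix product l (ν (m+1) − 1) * l (ν (m+1) − 2) * ⋯ * l (ν m) of the multiplicity matrices of (q, e, l) between levels ν m and ν (m+1) equals the matrix k m. -/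
/-!
Prepend a level with one vertex of size `1`, joined once to every vertex of level `0`, and replace
each step `m → m + 1` by a block of steps: the first carries the matrix `k m`, the others are
identity matrices, and along the block the size of vertex `i` starts at the row sum
`∑ j, k m i j * d m j`, the least size with nonnegative slack, and grows by one per level until it
reaches `d (m + 1) i`. Every slack is then `0` or `1`, and the matrices of a block multiply to
`k m`.
-/

/-- The ordinary product `l (m + n - 1) * ⋯ * l (m + 1) * l m` of the multiplicity matrices of
Bratteli-diagram data between levels `m` and `m + n` (the empty product being the identity). -/
def bratMatProd (q : ℕ → ℕ) (l : ∀ n, Matrix (Fin (q (n + 1))) (Fin (q n)) ℕ) (m : ℕ) :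
    ∀ n : ℕ, Matrix (Fin (q (m + n))) (Fin (q m)) ℕ
  | 0 => (1 : Matrix (Fin (q m)) (Fin (q m)) ℕ)
  | n + 1 => l (m + n) * bratMatProd q l m n

theorem Fin.sum_ite_val_eq_mul {M : Type*} [NonAssocSemiring M] {b i : ℕ} (hi : i < b)
    (f : Fin b → M) : ∑ z : Fin b, (if i = z.val then 1 else 0) * f z = f ⟨i, hi⟩ := by
  rw [Finset.sum_eq_single_of_mem ⟨i, hi⟩ (Finset.mem_univ _)
    fun z _ hz => by rw [if_neg fun h => hz (Fin.ext h.symm), zero_mul]]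
  simp

noncomputable section

section BlockOf

-- Block `m + 1` consists of the levels `μ m + 1, …, μ (m + 1)`.
def blockOf (μ : ℕ → ℕ) (n : ℕ) : ℕ := sInf {m | n ≤ μ m}

variable {μ : ℕ → ℕ}

theorem blockOf_zero : blockOf μ 0 = 0 :=
  Nat.sInf_eq_zero.mpr (Or.inl (Nat.zero_le _))

theorem StrictMono.blockOf_le_iff (hμ : StrictMono μ) {m n : ℕ} : blockOf μ n ≤ m ↔ n ≤ μ m :=
  ⟨fun h => (Nat.sInf_mem (s := {m | n ≤ μ m}) ⟨n, hμ.id_le n⟩).trans (hμ.monotone h),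
    fun h => Nat.sInf_le h⟩

theorem StrictMono.blockOf_apply (hμ : StrictMono μ) (m : ℕ) : blockOf μ (μ m) = m :=
  le_antisymm (hμ.blockOf_le_iff.mpr le_rfl)
    (hμ.le_iff_le.mp (hμ.blockOf_le_iff.mp le_rfl))

theorem StrictMono.blockOf_eq_succ (hμ : StrictMono μ) {m n : ℕ} (h₁ : μ m < n)
    (h₂ : n ≤ μ (m + 1)) : blockOf μ n = m + 1 :=
  le_antisymm (hμ.blockOf_le_iff.mpr h₂) (not_le.mp fun h => (hμ.blockOf_le_iff.mp h).not_gt h₁)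

theorem StrictMono.lt_of_blockOf_eq_succ (hμ : StrictMono μ) {m n : ℕ}
    (h : blockOf μ n = m + 1) : μ m < n :=
  not_le.mp fun hn => by have := hμ.blockOf_le_iff.mpr hn; omega

theorem StrictMono.exists_blockOf_succ (hμ : StrictMono μ) (hμ₀ : μ 0 = 0) (n : ℕ) :
    ∃ m, blockOf μ (n + 1) = m + 1 ∧ μ m ≤ n ∧ n < μ (m + 1) := by
  have hmem : n + 1 ≤ μ (blockOf μ (n + 1)) := hμ.blockOf_le_iff.mp le_rfl
  obtain ⟨m, hm⟩ : ∃ m, blockOf μ (n + 1) = m + 1 :=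
    Nat.exists_eq_succ_of_ne_zero fun h => by rw [h, hμ₀] at hmem; omega
  have := hμ.lt_of_blockOf_eq_succ hm
  exact ⟨m, hm, by omega, by rw [hm] at hmem; omega⟩

end BlockOf

namespace BratteliRefinement

variable (p : ℕ → ℕ) (d : ∀ n, Fin (p n) → ℕ) (k : ∀ n, Fin (p (n + 1)) → Fin (p n) → ℕ)

def extCard : ℕ → ℕ
  | 0 => 1
  | m + 1 => p m

-- Sizes and multiplicities are extended by junk values to all natural indices, sizes by `1` so
-- that they stay positive.
def extSize : ℕ → ℕ → ℕ
  | 0, _ => 1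
  | m + 1, i => if h : i < p m then d m ⟨i, h⟩ else 1

def extMult : ℕ → ℕ → ℕ → ℕ
  | 0, _, _ => 1
  | m + 1, i, j => if h : i < p (m + 1) ∧ j < p m then k m ⟨i, h.1⟩ ⟨j, h.2⟩ else 0

def extRowSum (m i : ℕ) : ℕ :=
  ∑ j ∈ Finset.range (extCard p m), extMult p k m i j * extSize p d m j

def blockLen (m : ℕ) : ℕ :=
  1 + ∑ i ∈ Finset.range (extCard p (m + 1)), extSize p d (m + 1) i

def blockEnd : ℕ → ℕ
  | 0 => 0
  | m + 1 => blockEnd m + blockLen p d m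

def refCard (n : ℕ) : ℕ := extCard p (blockOf (blockEnd p d) n)

def sizeInBlock (n : ℕ) : ℕ → ℕ → ℕ
  | 0, _ => 1
  | m + 1, i => min (extRowSum p d k m i + (n - blockEnd p d m)) (extSize p d (m + 1) i)

def refSize (n : ℕ) : ℕ → ℕ := sizeInBlock p d k n (blockOf (blockEnd p d) n)

def refMult (n i j : ℕ) : ℕ :=
  if blockOf (blockEnd p d) (n + 1) = blockOf (blockEnd p d) n + 1 then
    extMult p k (blockOf (blockEnd p d) n) i j
  else if i = j then 1 else 0

def refMatrix (n : ℕ) : Matrix (Fin (refCard p d (n + 1))) (Fin (refCard p d n)) ℕ :=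
  fun i j => refMult p d k n i j

variable {p d k}

theorem blockEnd_strictMono : StrictMono (blockEnd p d) :=
  strictMono_nat_of_lt_succ fun m => by simp only [blockEnd, blockLen]; omega

theorem blockOf_blockEnd (m : ℕ) : blockOf (blockEnd p d) (blockEnd p d m) = m :=
  blockEnd_strictMono.blockOf_apply m

theorem extSize_pos (hd : ∀ n (i : Fin (p n)), 1 ≤ d n i) (m i : ℕ) : 1 ≤ extSize p d m i := by
  cases m with
  | zero => exact le_rfl
  | succ m =>
    rw [extSize]
    split_ifs
    exacts [hd _ _, le_rfl]

theorem extRowSum_le (hd : ∀ n (i : Fin (p n)), 1 ≤ d n i)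
    (hslack : ∀ n (i : Fin (p (n + 1))), ∑ j, k n i j * d n j ≤ d (n + 1) i)
    {m i : ℕ} (hi : i < extCard p (m + 1)) : extRowSum p d k m i ≤ extSize p d (m + 1) i := by
  cases m with
  | zero => simpa [extRowSum, extCard, extMult, extSize] using extSize_pos hd 1 i
  | succ m =>
    have hi : i < p (m + 1) := hi
    convert hslack m ⟨i, hi⟩ using 1
    · rw [extRowSum, ← Fin.sum_univ_eq_sum_range]
      refine Finset.sum_congr rfl fun j _ => ?_
      have hj : (j : ℕ) < p m := j.isLt
      rw [extMult, extSize, dif_pos ⟨hi, hj⟩, dif_pos hj]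
      rfl
    · simp [extSize, hi]

theorem extSize_le_add_blockLen (m i : ℕ) :
    extSize p d (m + 1) i ≤ extRowSum p d k m i + blockLen p d m := by
  by_cases hi : i < extCard p (m + 1)
  · have := Finset.single_le_sum (fun j _ => Nat.zero_le (extSize p d (m + 1) j))
      (Finset.mem_range.mpr hi)
    rw [blockLen]; omega
  · simp only [extSize, dif_neg (show ¬ i < p m from hi), blockLen]; omega

theorem refSize_blockEnd (m i : ℕ) : refSize p d k (blockEnd p d m) i = extSize p d m i := by
  rw [refSize, blockOf_blockEnd]
  cases m with
  | zero => rfl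
  | succ m =>
    rw [sizeInBlock, blockEnd, Nat.add_sub_cancel_left]
    exact min_eq_right (extSize_le_add_blockLen m i)

theorem refSize_pos (hd : ∀ n (i : Fin (p n)), 1 ≤ d n i) (n i : ℕ) : 1 ≤ refSize p d k n i := by
  rw [refSize]
  match h : blockOf (blockEnd p d) n with
  | 0 => exact le_rfl
  | m + 1 =>
    have := blockEnd_strictMono.lt_of_blockOf_eq_succ h
    exact le_min (by omega) (extSize_pos hd _ _)

theorem refCard_blockEnd (m : ℕ) : refCard p d (blockEnd p d m) = extCard p m := by
  rw [refCard, blockOf_blockEnd]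

theorem refSize_zero (i : ℕ) : refSize p d k 0 i = 1 := by
  rw [refSize, blockOf_zero, sizeInBlock]

theorem refSize_succ (hd : ∀ n (i : Fin (p n)), 1 ≤ d n i)
    (hslack : ∀ n (i : Fin (p (n + 1))), ∑ j, k n i j * d n j ≤ d (n + 1) i)
    {n : ℕ} (i : Fin (refCard p d (n + 1))) :
    ∑ j, refMatrix p d k n i j * refSize p d k n j ≤ refSize p d k (n + 1) i ∧
      refSize p d k (n + 1) i ≤ ∑ j, refMatrix p d k n i j * refSize p d k n j + 1 := by
  simp only [refMatrix,
    Fin.sum_univ_eq_sum_range (fun j => refMult p d k n i j * refSize p d k n j)]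
  obtain ⟨i, hi⟩ := i
  obtain ⟨m, hm, hlo, hhi⟩ := blockEnd_strictMono.exists_blockOf_succ rfl n
  have hcard : i < extCard p (m + 1) := by rwa [refCard, hm] at hi
  have hsize : refSize p d k (n + 1) i =
      min (extRowSum p d k m i + (n + 1 - blockEnd p d m)) (extSize p d (m + 1) i) := by
    rw [refSize, hm, sizeInBlock]
  rcases hlo.eq_or_lt with rfl | hlt
  · -- the first step of a block carries the multiplicity matrix
    have hS := extRowSum_le hd hslack hcard
    simp only [refCard, refMult, hm, blockOf_blockEnd, if_true, refSize_blockEnd]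
    rw [← extRowSum, hsize]
    omega
  · have hn : blockOf (blockEnd p d) n = m + 1 := blockEnd_strictMono.blockOf_eq_succ hlt hhi.le
    have hsize' : refSize p d k n i =
        min (extRowSum p d k m i + (n - blockEnd p d m)) (extSize p d (m + 1) i) := by
      rw [refSize, hn, sizeInBlock]
    have hne : m + 1 ≠ m + 1 + 1 := by omega
    simp only [refCard, refMult, hm, hn, hne, if_false, ite_mul, one_mul, zero_mul,
      Finset.sum_ite_eq, Finset.mem_range, hcard, if_true, hsize, hsize']
    omega

theorem bratMatProd_refMatrix_apply {m r : ℕ} (hr₁ : 1 ≤ r) (hr₂ : r ≤ blockLen p d m)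
    (i : Fin (refCard p d (blockEnd p d m + r))) (j : Fin (refCard p d (blockEnd p d m))) :
    bratMatProd (refCard p d) (refMatrix p d k) (blockEnd p d m) r i j = extMult p k m i j := by
  induction r with
  | zero => omega
  | succ r ih =>
    have hend : blockEnd p d (m + 1) = blockEnd p d m + blockLen p d m := rfl
    have hblock : blockOf (blockEnd p d) (blockEnd p d m + r + 1) = m + 1 :=
      blockEnd_strictMono.blockOf_eq_succ (by omega) (by omega)
    rcases Nat.eq_zero_or_pos r with rfl | hr
    · rw [bratMatProd, bratMatProd, Matrix.mul_one]
      rw [add_zero] at hblock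
      simp only [refMatrix, refMult, add_zero, blockOf_blockEnd, hblock, if_true]
    · -- past the first step of a block the matrices are identities
      have hblock' : blockOf (blockEnd p d) (blockEnd p d m + r) = m + 1 :=
        blockEnd_strictMono.blockOf_eq_succ (by omega) (by omega)
      have hne : m + 1 ≠ m + 1 + 1 := by omega
      have hrow (z : Fin (refCard p d (blockEnd p d m + r))) :
          refMatrix p d k (blockEnd p d m + r) i z = if (i : ℕ) = z then 1 else 0 := by
        simp only [refMatrix, refMult, hblock, hblock', hne, if_false]
      have hi : (i : ℕ) < refCard p d (blockEnd p d m + r) := by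
        simpa only [refCard, ← add_assoc, hblock, hblock'] using i.isLt
      rw [bratMatProd, Matrix.mul_apply]
      simp only [hrow]
      rw [Fin.sum_ite_val_eq_mul hi]
      exact ih hr (by omega) _

end BratteliRefinement

end

open BratteliRefinement

/-- Given Bratteli-diagram data `(p, d, k)` with all sizes `≥ 1`, all slacks
nonnegative, and injective connecting maps, there are Bratteli-diagram data `(q, e, l)` with
`q 0 = 1`, `e 0 ⟨0⟩ = 1`, all sizes `≥ 1`, nonnegative slacks which are `≤ 1` at every level
`≥ 1`, and a strictly increasing `ν : ℕ → ℕ` such that `(q, e)` at level `ν m` agrees with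
`(p, d)` at level `m` and the product of the multiplicity matrices of `(q, e, l)` between
levels `ν m` and `ν (m+1)` is the matrix `k m`. -/
theorem exists_bratteli_with_small_slack
    (p : ℕ → ℕ) (d : ∀ n, Fin (p n) → ℕ)
    (k : ∀ n, Fin (p (n + 1)) → Fin (p n) → ℕ)
    (hd : ∀ n (i : Fin (p n)), 1 ≤ d n i)
    (hslack : ∀ n (i : Fin (p (n + 1))), ∑ j, k n i j * d n j ≤ d (n + 1) i) :
    ∃ (q : ℕ → ℕ) (e : ∀ n, Fin (q n) → ℕ)
      (l : ∀ n, Matrix (Fin (q (n + 1))) (Fin (q n)) ℕ)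
      (hq0 : q 0 = 1),
      e 0 ⟨0, by omega⟩ = 1 ∧
      (∀ n (i : Fin (q n)), 1 ≤ e n i) ∧
      (∀ n (i : Fin (q (n + 1))), ∑ j, l n i j * e n j ≤ e (n + 1) i) ∧
      (∀ n (i : Fin (q (n + 1))), e (n + 1) i ≤ (∑ j, l n i j * e n j) + 1) ∧
      ∃ (ν : ℕ → ℕ) (hν : StrictMono ν) (hq : ∀ m, q (ν m) = p m),
        (∀ m (i : Fin (p m)), e (ν m) (Fin.cast (hq m).symm i) = d m i) ∧
        (∀ m (i : Fin (p (m + 1))) (j : Fin (p m)),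
          bratMatProd q l (ν m) (ν (m + 1) - ν m)
            (Fin.cast
              (((hq (m + 1)).symm).trans
                (congrArg q (Nat.add_sub_cancel' (hν.monotone (Nat.le_succ m)))).symm) i)
            (Fin.cast (hq m).symm j)
          = k m i j) := by
  refine ⟨refCard p d, fun n i => refSize p d k n i, refMatrix p d k, refCard_blockEnd 0,
    refSize_zero 0, fun n i => refSize_pos hd n i, fun n i => (refSize_succ hd hslack i).1,
    fun n i => (refSize_succ hd hslack i).2, fun m => blockEnd p d (m + 1),
    blockEnd_strictMono.comp (strictMono_id.add_const 1), fun m => refCard_blockEnd (m + 1),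
    fun m i => by simp [refSize_blockEnd, extSize], fun m i j => ?_⟩
  have hlen : blockEnd p d (m + 1 + 1) - blockEnd p d (m + 1) = blockLen p d (m + 1) :=
    Nat.add_sub_cancel_left _ _
  rw [bratMatProd_refMatrix_apply (by simp [hlen, blockLen]) hlen.le]
  simp [extMult]
end

section
/- Let X be a normed vector space over ℂ, let P : X →L[ℂ] X be a continuous linear map with P ∘ P = P, and let D be a dense linear subspace of X with P '' D ⊆ D. Then the kernel of P equals the closure of (ker P) ∩ D. -/
open Set

theorem subset_closure_inter_of_retract {X : Type*} [TopologicalSpace X] {K D : Set X}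
    (r : X → X) (hr : Continuous r) (hD : Dense D) (hrK : ∀ x ∈ K, r x = x)
    (hrD : MapsTo r D (K ∩ D)) : K ⊆ closure (K ∩ D) := fun x hx =>
  hrK x hx ▸ map_mem_closure hr (hD x) hrD

namespace ContinuousLinearMap

variable {R M : Type*} [Ring R] [TopologicalSpace M] [AddCommGroup M] [Module R M]
  [ContinuousSub M]

/-- `id - P` is a continuous retraction onto `ker P` that preserves `D`. -/
theorem ker_subset_closure_ker_inter_of_idempotent (P : M →L[R] M) (hP : ∀ x, P (P x) = P x)
    (D : Submodule R M) (hD : Dense (D : Set M)) (hinv : MapsTo P D D) :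
    (LinearMap.ker (P : M →ₗ[R] M) : Set M) ⊆ closure (LinearMap.ker (P : M →ₗ[R] M) ∩ D) := by
  refine subset_closure_inter_of_retract (fun y => y - P y) (continuous_id.sub P.continuous) hD
    (fun x hx => ?_) (fun y hy => ⟨?_, D.sub_mem hy (hinv hy)⟩)
  · rw [SetLike.mem_coe, LinearMap.mem_ker, coe_coe] at hx
    rw [hx, sub_zero]
  · simp [hP y]

end ContinuousLinearMap

/-- Let `X` be a normed vector space over `ℂ`, `P : X →L[ℂ] X` a continuous
linear idempotent (`P ∘ P = P`), and `D` a dense linear subspace of `X` invariant under `P`.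
Then `ker P = closure (ker P ∩ D)`. -/
theorem kernel_eq_closure_kernel_inter_dense
    {X : Type*} [NormedAddCommGroup X] [NormedSpace ℂ X]
    (P : X →L[ℂ] X) (hP : ∀ x, P (P x) = P x)
    (D : Submodule ℂ X) (hdense : Dense (D : Set X))
    (hinv : P '' (D : Set X) ⊆ (D : Set X)) :
    (LinearMap.ker (P : X →ₗ[ℂ] X) : Set X) = closure ((LinearMap.ker (P : X →ₗ[ℂ] X) : Set X) ∩ (D : Set X)) :=
  (P.ker_subset_closure_ker_inter_of_idempotent hP D hdense (mapsTo_iff_image_subset.mpr hinv)).antisymm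
    (P.isClosed_ker.closure_subset_iff.mpr inter_subset_left)
end

section
/- With the hypotheses in the context, for every (a, b) ∈ G with a ≠ b there exists a τ-open set S ⊆ G containing (a, b) such that both π₁ and π₂ are injective on S and π₁ '' S ∩ π₂ '' S = ∅. -/
open Set

theorem exists_isOpen_mem_disjoint_image {Y X : Type*} [TopologicalSpace Y]
    [TopologicalSpace X] [T2Space X] {f g : Y → X} (hf : Continuous f) (hg : Continuous g)
    {y : Y} (hy : f y ≠ g y) :
    ∃ W : Set Y, IsOpen W ∧ y ∈ W ∧ Disjoint (f '' W) (g '' W) := by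
  obtain ⟨U, V, hU, hV, hyU, hyV, hUV⟩ := t2_separation hy
  refine ⟨f ⁻¹' U ∩ g ⁻¹' V, (hU.preimage hf).inter (hV.preimage hg), ⟨hyU, hyV⟩, ?_⟩
  exact hUV.mono (image_subset_iff.mpr fun _ h => h.1) (image_subset_iff.mpr fun _ h => h.2)

theorem exists_open_Gset_disjoint_source_range_general
    {X : Type*} [tX : TopologicalSpace X] [T2Space X]
    (R : X → X → Prop)
    (τ : TopologicalSpace {x : X × X // R x.1 x.2})
    (hc1 : @Continuous _ _ τ tX fun g : {x : X × X // R x.1 x.2} => g.1.1)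
    (hc2 : @Continuous _ _ τ tX fun g : {x : X × X // R x.1 x.2} => g.1.2)
    (hGsets : ∀ g : {x : X × X // R x.1 x.2},
      ∃ S : Set {x : X × X // R x.1 x.2}, @IsOpen _ τ S ∧ g ∈ S ∧
        Set.InjOn (fun g : {x : X × X // R x.1 x.2} => g.1.1) S ∧
        Set.InjOn (fun g : {x : X × X // R x.1 x.2} => g.1.2) S)
    (g : {x : X × X // R x.1 x.2}) (hg : g.1.1 ≠ g.1.2) :
    ∃ S : Set {x : X × X // R x.1 x.2}, @IsOpen _ τ S ∧ g ∈ S ∧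
      Set.InjOn (fun g : {x : X × X // R x.1 x.2} => g.1.1) S ∧
      Set.InjOn (fun g : {x : X × X // R x.1 x.2} => g.1.2) S ∧
      ((fun g : {x : X × X // R x.1 x.2} => g.1.1) '' S) ∩
        ((fun g : {x : X × X // R x.1 x.2} => g.1.2) '' S) = ∅ := by
  let _ := τ
  obtain ⟨S, hS, hgS, hinj₁, hinj₂⟩ := hGsets g
  obtain ⟨W, hW, hgW, hdisj⟩ := exists_isOpen_mem_disjoint_image hc1 hc2 hg
  refine ⟨S ∩ W, hS.inter hW, ⟨hgS, hgW⟩, hinj₁.mono inter_subset_left,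
    hinj₂.mono inter_subset_left, ?_⟩
  exact disjoint_iff_inter_eq_empty.mp <|
    hdisj.mono (image_mono inter_subset_right) (image_mono inter_subset_right)

/-- Let `X` be a Hausdorff space, `R` an equivalence relation on `X`, and let
`G = {(a, b) | R a b}` carry a topology `τ` making both coordinate projections continuous, and
such that every point of `G` has a `τ`-open neighborhood on which both projections are injective
(an open `G`-set).  Then every `(a, b) ∈ G` with `a ≠ b` lies in an open `G`-set `S` with
`π₁ '' S ∩ π₂ '' S = ∅`. -/
theorem exists_open_Gset_disjoint_source_range
    {X : Type*} [tX : TopologicalSpace X] [T2Space X]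
    (R : X → X → Prop) (hR : Equivalence R)
    (τ : TopologicalSpace {x : X × X // R x.1 x.2})
    (hc1 : @Continuous _ _ τ tX fun g : {x : X × X // R x.1 x.2} => g.1.1)
    (hc2 : @Continuous _ _ τ tX fun g : {x : X × X // R x.1 x.2} => g.1.2)
    (hGsets : ∀ g : {x : X × X // R x.1 x.2},
      ∃ S : Set {x : X × X // R x.1 x.2}, @IsOpen _ τ S ∧ g ∈ S ∧
        Set.InjOn (fun g : {x : X × X // R x.1 x.2} => g.1.1) S ∧
        Set.InjOn (fun g : {x : X × X // R x.1 x.2} => g.1.2) S)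
    (g : {x : X × X // R x.1 x.2}) (hg : g.1.1 ≠ g.1.2) :
    ∃ S : Set {x : X × X // R x.1 x.2}, @IsOpen _ τ S ∧ g ∈ S ∧
      Set.InjOn (fun g : {x : X × X // R x.1 x.2} => g.1.1) S ∧
      Set.InjOn (fun g : {x : X × X // R x.1 x.2} => g.1.2) S ∧
      ((fun g : {x : X × X // R x.1 x.2} => g.1.1) '' S) ∩
        ((fun g : {x : X × X // R x.1 x.2} => g.1.2) '' S) = ∅ :=
  exists_open_Gset_disjoint_source_range_general (tX := tX) R τ hc1 hc2 hGsets g hg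
end

section
/- Assume moreover that (G, τ) is locally compact and Hausdorff and that the diagonal {(a, a) | a ∈ X} ∩ G is τ-open in G. Let f : G → ℂ be τ-continuous with compact support such that f (a, a) = 0 for every a with (a, a) ∈ G. Then there exist finitely many τ-open sets S₁, …, S_N ⊆ G, on each of which both π₁ and π₂ are injective and which satisfy π₁ '' S_i ∩ π₂ '' S_i = ∅, and continuous functions g₁, …, g_N : G → ℂ with the closed support of g_i contained in S_i, such that f = g₁ + ⋯ + g_N. -/
theorem aux_decomp
    {G : Type*} [τ : TopologicalSpace G] [LocallyCompactSpace G] [T2Space G]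
    {X : Type*} [TopologicalSpace X] [T2Space X]
    (p1 p2 : G → X) (hc1 : Continuous p1) (hc2 : Continuous p2)
    (hGsets : ∀ g : G, ∃ S : Set G, IsOpen S ∧ g ∈ S ∧
        Set.InjOn p1 S ∧ Set.InjOn p2 S)
    (hdiag : IsOpen {g : G | p1 g = p2 g})
    (f : G → ℂ) (hf : Continuous f) (hfc : HasCompactSupport f)
    (hf0 : ∀ g : G, p1 g = p2 g → f g = 0) :
    ∃ (N : ℕ) (S : Fin N → Set G) (g : Fin N → (G → ℂ)),
      (∀ i, IsOpen (S i)) ∧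
      (∀ i, Set.InjOn p1 (S i) ∧ Set.InjOn p2 (S i)) ∧
      (∀ i, (p1 '' S i) ∩ (p2 '' S i) = ∅) ∧
      (∀ i, Continuous (g i)) ∧
      (∀ i, tsupport (g i) ⊆ S i) ∧
      (∀ x, f x = ∑ i, g i x) := by
  classical
  have hK : IsCompact (tsupport f) := hfc
  have hKoff : ∀ g ∈ tsupport f, p1 g ≠ p2 g := by
    intro g hg
    have hsub : tsupport f ⊆ {g : G | p1 g ≠ p2 g} := by
      apply closure_minimal
      · intro x hx heq
        exact hx (hf0 x heq)
      · exact isClosed_compl_iff.2 hdiag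
    exact hsub hg
  have key : ∀ g : G, ∃ S' : Set G, IsOpen S' ∧
      Set.InjOn p1 S' ∧ Set.InjOn p2 S' ∧
      (p1 '' S') ∩ (p2 '' S') = ∅ ∧
      (g ∈ tsupport f → g ∈ S') := by
    intro g
    by_cases hg : g ∈ tsupport f
    · obtain ⟨S, hSo, hgS, hi1, hi2⟩ := hGsets g
      obtain ⟨U, V, hU, hV, haU, hbV, hUV⟩ := t2_separation (hKoff g hg)
      refine ⟨S ∩ (p1 ⁻¹' U) ∩ (p2 ⁻¹' V),
        (hSo.inter (hU.preimage hc1)).inter (hV.preimage hc2),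
        hi1.mono (by intro x hx; exact hx.1.1),
        hi2.mono (by intro x hx; exact hx.1.1), ?_, fun _ => ⟨⟨hgS, haU⟩, hbV⟩⟩
      apply Set.eq_empty_iff_forall_notMem.2
      rintro x ⟨⟨a, ha, rfl⟩, ⟨b, hb, hab⟩⟩
      exact Set.disjoint_left.1 hUV ha.1.2 (hab ▸ hb.2)
    · exact ⟨∅, isOpen_empty, fun x hx => absurd hx (Set.notMem_empty x),
        fun x hx => absurd hx (Set.notMem_empty x),
        by simp, fun h => absurd h hg⟩
  choose T hTo hTi1 hTi2 hTd hTm using key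
  obtain ⟨t, ht⟩ := hK.elim_finite_subcover T hTo
    (fun x hx => Set.mem_iUnion.2 ⟨x, hTm x hx⟩)
  let e := t.equivFin
  set S : Fin t.card → Set G := fun i => T (e.symm i) with hSdef
  have hScover : tsupport f ⊆ ⋃ i, S i := by
    intro x hx
    obtain ⟨y, hy⟩ := Set.mem_iUnion.1 (ht hx)
    simp only [Set.mem_iUnion] at hy
    obtain ⟨hyt, hxy⟩ := hy
    exact Set.mem_iUnion.2 ⟨e ⟨y, hyt⟩, by simpa [hSdef] using hxy⟩
  obtain ⟨φ, hφsup, hφone, hφmem, hφc⟩ :=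
    exists_continuous_sum_one_of_isOpen_isCompact (fun i => hTo _) hK hScover
  refine ⟨t.card, S, fun i x => (φ i x : ℂ) * f x, fun i => hTo _,
    fun i => ⟨hTi1 _, hTi2 _⟩, fun i => hTd _, ?_, ?_, ?_⟩
  · intro i
    exact (Complex.continuous_ofReal.comp (φ i).continuous).mul hf
  · intro i
    refine Set.Subset.trans (closure_mono ?_) (hφsup i)
    intro x hx
    simp only [Function.mem_support] at hx ⊢
    intro h0
    exact hx (by simp [h0])
  · intro x
    by_cases hx : x ∈ tsupport f
    · have h1 := hφone hx
      simp only [Finset.sum_apply, Pi.one_apply] at h1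
      have hsum : (∑ i, (φ i x : ℂ)) = 1 := by
        rw [← Complex.ofReal_sum, h1, Complex.ofReal_one]
      calc f x = (∑ i, (φ i x : ℂ)) * f x := by rw [hsum, one_mul]
        _ = ∑ i, (φ i x : ℂ) * f x := by rw [Finset.sum_mul]
    · have hfx : f x = 0 := image_eq_zero_of_notMem_tsupport hx
      simp [hfx]

/-- With `X` Hausdorff, `R` an equivalence relation, and
`G = {(a, b) | R a b}` carrying a topology `τ` with continuous projections and a base of open
`G`-sets, assume moreover that `(G, τ)` is locally compact Hausdorff and that the diagonal part
of `G` is `τ`-open.  If `f : G → ℂ` is `τ`-continuous with compact support and vanishes on the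
diagonal, then `f` is a finite sum of continuous functions `gᵢ` whose closed supports are
contained in open `G`-sets `Sᵢ` with `π₁ '' Sᵢ ∩ π₂ '' Sᵢ = ∅`. -/
theorem compactly_supported_offdiag_function_decomposition
    {X : Type*} [tX : TopologicalSpace X] [T2Space X]
    (R : X → X → Prop) (hR : Equivalence R)
    (τ : TopologicalSpace {x : X × X // R x.1 x.2})
    (hc1 : @Continuous _ _ τ tX fun g : {x : X × X // R x.1 x.2} => g.1.1)
    (hc2 : @Continuous _ _ τ tX fun g : {x : X × X // R x.1 x.2} => g.1.2)
    (hGsets : ∀ g : {x : X × X // R x.1 x.2},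
      ∃ S : Set {x : X × X // R x.1 x.2}, @IsOpen _ τ S ∧ g ∈ S ∧
        Set.InjOn (fun g : {x : X × X // R x.1 x.2} => g.1.1) S ∧
        Set.InjOn (fun g : {x : X × X // R x.1 x.2} => g.1.2) S)
    (hlc : @LocallyCompactSpace _ τ) (hT2 : @T2Space _ τ)
    (hdiag : @IsOpen _ τ {g : {x : X × X // R x.1 x.2} | g.1.1 = g.1.2})
    (f : {x : X × X // R x.1 x.2} → ℂ)
    (hf : @Continuous _ _ τ _ f)
    (hfc : @HasCompactSupport _ _ τ _ f)
    (hf0 : ∀ g : {x : X × X // R x.1 x.2}, g.1.1 = g.1.2 → f g = 0) :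
    ∃ (N : ℕ) (S : Fin N → Set {x : X × X // R x.1 x.2})
      (g : Fin N → ({x : X × X // R x.1 x.2} → ℂ)),
      (∀ i, @IsOpen _ τ (S i)) ∧
      (∀ i, Set.InjOn (fun g : {x : X × X // R x.1 x.2} => g.1.1) (S i) ∧
            Set.InjOn (fun g : {x : X × X // R x.1 x.2} => g.1.2) (S i)) ∧
      (∀ i, ((fun g : {x : X × X // R x.1 x.2} => g.1.1) '' S i) ∩
            ((fun g : {x : X × X // R x.1 x.2} => g.1.2) '' S i) = ∅) ∧
      (∀ i, @Continuous _ _ τ _ (g i)) ∧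
      (∀ i, @tsupport _ _ _ τ (g i) ⊆ S i) ∧
      (∀ x, f x = ∑ i, g i x) := by
  letI := τ; exact aux_decomp _ _ hc1 hc2 hGsets hdiag f hf hfc hf0
end

section
/- D is an abelian *-subalgebra of B, and D is maximal abelian in the relative commutant of ι(A) in B: if x ∈ B commutes with ι M for every M ∈ A and also commutes with every element of D, then x ∈ D. -/
/-- The index set `G w` of the matrix block of `B` at the vertex `w ∈ W`: pairs `(e, α)` of an
edge `e` with range `w` together with an index `α` of the block `F (s e)` of `A`, plus one extra
point when `w ∈ T`. -/
abbrev GIdx {V W E : Type*} (s : E → V) (r : E → W) (T : Set W) (F : V → Type*) (w : W) :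
    Type _ :=
  (Σ e : {e : E // r e = w}, F (s e.1)) ⊕ {_u : Unit // w ∈ T}

/-- The `*`-homomorphism `ι : A → B` (as a map):  the entry of `(ι M) w` at
`(inl ⟨e, α⟩, inl ⟨e', β⟩)` is `M (s e) α β` when `e = e'` and `0` otherwise, and all entries
involving an `inr` index vanish. -/
def iotaMap {V W E : Type*} [DecidableEq E] (s : E → V) (r : E → W) (T : Set W)
    (F : V → Type*) (M : ∀ v, Matrix (F v) (F v) ℂ) (w : W) :
    Matrix (GIdx s r T F w) (GIdx s r T F w) ℂ :=
  Matrix.of fun x y =>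
    match x, y with
    | Sum.inl ⟨e, a⟩, Sum.inl ⟨e', b⟩ =>
        if h : e = e' then
          M (s e.1) a (cast (congrArg (fun t : {e : E // r e = w} => F (s t.1)) h.symm) b)
        else 0
    | _, _ => 0

/-- The element `f_e` of `B` associated with an edge `e ∈ E`: in each block `w`, the diagonal
matrix whose diagonal entry at `inl ⟨e', α⟩` is `1` if `e' = e` and `0` otherwise, and whose
entries at `inr` points vanish. -/
def fEdge {V W E : Type*} [DecidableEq E] [DecidableEq W] (s : E → V) (r : E → W) (T : Set W)
    (F : V → Type*) [∀ v, DecidableEq (F v)] (e : E) (w : W) :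
    Matrix (GIdx s r T F w) (GIdx s r T F w) ℂ :=
  Matrix.diagonal fun x =>
    match x with
    | Sum.inl ⟨e', _⟩ => if e'.1 = e then 1 else 0
    | Sum.inr _ => 0

/-- The element `f_w₀` of `B` associated with a vertex `w₀ ∈ T`: the diagonal matrix unit at the
extra (`inr`) point of the block `G w₀`, and zero in all other blocks. -/
def fVert {V W E : Type*} [DecidableEq W] (s : E → V) (r : E → W) (T : Set W)
    (F : V → Type*) (w₀ : W) (w : W) :
    Matrix (GIdx s r T F w) (GIdx s r T F w) ℂ :=
  Matrix.of fun x y =>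
    if w = w₀ then
      match x, y with
      | Sum.inr _, Sum.inr _ => 1
      | _, _ => 0
    else 0

/-- The subspace `D` of `B`: the linear span of the elements `f_e` for `e ∈ E` and `f_w` for
`w ∈ T`. -/
noncomputable def diagSubmodule {V W E : Type*} [DecidableEq E] [DecidableEq W]
    (s : E → V) (r : E → W) (T : Set W) (F : V → Type*) [∀ v, DecidableEq (F v)] :
    Submodule ℂ (∀ w, Matrix (GIdx s r T F w) (GIdx s r T F w) ℂ) :=
  Submodule.span ℂ
    (Set.range (fun e => (fEdge s r T F e : ∀ w, Matrix (GIdx s r T F w) (GIdx s r T F w) ℂ)) ∪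
      (fun w₀ => (fVert s r T F w₀ : ∀ w, Matrix (GIdx s r T F w) (GIdx s r T F w) ℂ)) '' T)

set_option linter.unusedSectionVars false

section Aux
variable {V W E : Type*} [Fintype V] [Fintype W] [Fintype E]
    [DecidableEq V] [DecidableEq W] [DecidableEq E]
    (s : E → V) (r : E → W) (T : Set W) [DecidablePred (· ∈ T)]
    (F : V → Type*) [∀ v, Fintype (F v)] [∀ v, DecidableEq (F v)] [∀ v, Nonempty (F v)]

lemma fVert_eq_diagonal (w₀ w : W) :
    fVert s r T F w₀ w = Matrix.diagonal (fun x : GIdx s r T F w =>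
      if w = w₀ then (match x with | Sum.inl _ => 0 | Sum.inr _ => (1:ℂ)) else 0) := by
  ext x y
  rcases x with ⟨e, a⟩ | u <;> rcases y with ⟨e', b⟩ | u'
  · simp [fVert, Matrix.diagonal_apply]
  · simp [fVert, Matrix.diagonal_apply]
  · simp [fVert, Matrix.diagonal_apply]
  · obtain rfl : u = u' := Subsingleton.elim u u'
    simp [fVert, Matrix.diagonal_apply]

lemma fEdge_eq_diagonal (e : E) (w : W) :
    fEdge s r T F e w = Matrix.diagonal (fun x : GIdx s r T F w =>
      match x with
      | Sum.inl ⟨e', _⟩ => if e'.1 = e then 1 else 0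
      | Sum.inr _ => (0:ℂ)) := rfl

lemma fEdge_mem (e : E) : fEdge s r T F e ∈ diagSubmodule s r T F :=
  Submodule.subset_span (Or.inl ⟨e, rfl⟩)

lemma fVert_mem {w₀ : W} (hw : w₀ ∈ T) : fVert s r T F w₀ ∈ diagSubmodule s r T F :=
  Submodule.subset_span (Or.inr ⟨w₀, hw, rfl⟩)

lemma mem_diag {x} (hx : x ∈ diagSubmodule s r T F) :
    ∃ p : ∀ w, GIdx s r T F w → ℂ, x = fun w => Matrix.diagonal (p w) := by
  refine Submodule.span_induction ?_ ?_ ?_ ?_ hx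
  · rintro y (⟨e, rfl⟩ | ⟨w₀, hw₀, rfl⟩)
    · exact ⟨_, funext fun w => fEdge_eq_diagonal s r T F e w⟩
    · exact ⟨_, funext fun w => fVert_eq_diagonal s r T F w₀ w⟩
  · exact ⟨0, by funext w; exact Matrix.diagonal_zero.symm⟩
  · rintro a b _ _ ⟨p, rfl⟩ ⟨q, rfl⟩
    exact ⟨p + q, by funext w; simp [Matrix.diagonal_add]⟩
  · rintro t a _ ⟨p, rfl⟩
    exact ⟨t • p, by funext w; simp [Matrix.diagonal_smul]⟩


lemma star_fEdge (e : E) : star (fEdge s r T F e) = fEdge s r T F e := by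
  funext w
  rw [Pi.star_apply, fEdge_eq_diagonal, Matrix.star_eq_conjTranspose,
    Matrix.diagonal_conjTranspose]
  refine congrArg Matrix.diagonal ?_
  funext z
  rcases z with ⟨e', a⟩ | u
  · simp [Pi.star_apply, apply_ite (star : ℂ → ℂ)]
  · simp [Pi.star_apply]

lemma star_fVert (w₀ : W) : star (fVert s r T F w₀) = fVert s r T F w₀ := by
  funext w
  rw [Pi.star_apply, fVert_eq_diagonal, Matrix.star_eq_conjTranspose,
    Matrix.diagonal_conjTranspose]
  refine congrArg Matrix.diagonal ?_
  funext z
  rcases z with ⟨e', a⟩ | u <;>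
    simp [Pi.star_apply, apply_ite (star : ℂ → ℂ)]

lemma fEdge_mul_fEdge (e e' : E) :
    fEdge s r T F e * fEdge s r T F e' =
      if e = e' then fEdge s r T F e else 0 := by
  funext w
  by_cases h : e = e'
  · subst h
    simp only [if_pos rfl, Pi.mul_apply, fEdge_eq_diagonal, Matrix.diagonal_mul_diagonal]
    refine congrArg Matrix.diagonal ?_
    funext z
    rcases z with ⟨e'', a⟩ | u
    · simp only
      split_ifs <;> simp
    · simp
  · simp only [if_neg h, Pi.mul_apply, fEdge_eq_diagonal, Matrix.diagonal_mul_diagonal,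
      Pi.zero_apply]
    have : (fun z : GIdx s r T F w =>
        (match z with
        | Sum.inl ⟨e'', _⟩ => if e''.1 = e then (1:ℂ) else 0
        | Sum.inr _ => 0) *
        (match z with
        | Sum.inl ⟨e'', _⟩ => if e''.1 = e' then (1:ℂ) else 0
        | Sum.inr _ => 0)) = fun _ => 0 := by
      funext z
      rcases z with ⟨e'', a⟩ | u
      · simp only
        split_ifs with h1 h2 <;> simp_all
      · simp
    rw [this, Matrix.diagonal_zero]

lemma fEdge_mul_fVert (e : E) (w₀ : W) :
    fEdge s r T F e * fVert s r T F w₀ = 0 := by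
  funext w
  simp only [Pi.mul_apply, fEdge_eq_diagonal, fVert_eq_diagonal,
    Matrix.diagonal_mul_diagonal, Pi.zero_apply]
  have : (fun z : GIdx s r T F w =>
      (match z with
      | Sum.inl ⟨e'', _⟩ => if e''.1 = e then (1:ℂ) else 0
      | Sum.inr _ => 0) *
      (if w = w₀ then (match z with | Sum.inl _ => 0 | Sum.inr _ => (1:ℂ)) else 0))
      = fun _ => 0 := by
    funext z
    rcases z with ⟨e'', a⟩ | u <;> simp
  rw [this, Matrix.diagonal_zero]

lemma fVert_mul_fEdge (e : E) (w₀ : W) :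
    fVert s r T F w₀ * fEdge s r T F e = 0 := by
  funext w
  simp only [Pi.mul_apply, fEdge_eq_diagonal, fVert_eq_diagonal,
    Matrix.diagonal_mul_diagonal, Pi.zero_apply]
  have : (fun z : GIdx s r T F w =>
      (if w = w₀ then (match z with | Sum.inl _ => 0 | Sum.inr _ => (1:ℂ)) else 0) *
      (match z with
      | Sum.inl ⟨e'', _⟩ => if e''.1 = e then (1:ℂ) else 0
      | Sum.inr _ => 0)) = fun _ => 0 := by
    funext z
    rcases z with ⟨e'', a⟩ | u <;> simp
  rw [this, Matrix.diagonal_zero]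

lemma fVert_mul_fVert (w₀ w₁ : W) :
    fVert s r T F w₀ * fVert s r T F w₁ =
      if w₀ = w₁ then fVert s r T F w₀ else 0 := by
  funext w
  by_cases h : w₀ = w₁
  · subst h
    simp only [if_pos rfl, Pi.mul_apply, fVert_eq_diagonal, Matrix.diagonal_mul_diagonal]
    have : (fun z : GIdx s r T F w =>
        (if w = w₀ then (match z with | Sum.inl _ => 0 | Sum.inr _ => (1:ℂ)) else 0) *
        (if w = w₀ then (match z with | Sum.inl _ => 0 | Sum.inr _ => (1:ℂ)) else 0))
        = fun z : GIdx s r T F w =>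
          (if w = w₀ then (match z with | Sum.inl _ => 0 | Sum.inr _ => (1:ℂ)) else 0) := by
      funext z
      rcases z with ⟨e', a⟩ | u <;> split_ifs <;> simp
    rw [this]
    simp [fVert_eq_diagonal]
  · simp only [if_neg h, Pi.mul_apply, fVert_eq_diagonal, Matrix.diagonal_mul_diagonal,
      Pi.zero_apply]
    have : (fun z : GIdx s r T F w =>
        (if w = w₀ then (match z with | Sum.inl _ => 0 | Sum.inr _ => (1:ℂ)) else 0) *
        (if w = w₁ then (match z with | Sum.inl _ => 0 | Sum.inr _ => (1:ℂ)) else 0))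
        = fun _ => 0 := by
      funext z
      split_ifs with h1 h2 <;> simp_all
    rw [this, Matrix.diagonal_zero]


lemma iota_apply_eq (M : ∀ v, Matrix (F v) (F v) ℂ) (w : W) (e : {e : E // r e = w})
    (a b : F (s e.1)) :
    iotaMap s r T F M w (Sum.inl ⟨e, a⟩) (Sum.inl ⟨e, b⟩) = M (s e.1) a b := by
  simp [iotaMap]

lemma iota_apply_ne (M : ∀ v, Matrix (F v) (F v) ℂ) (w : W) (e e' : {e : E // r e = w})
    (h : e ≠ e') (a : F (s e.1)) (b : F (s e'.1)) :
    iotaMap s r T F M w (Sum.inl ⟨e, a⟩) (Sum.inl ⟨e', b⟩) = 0 := by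
  simp [iotaMap, h]

lemma iota_apply_inr_left (M : ∀ v, Matrix (F v) (F v) ℂ) (w : W) (u : {_u : Unit // w ∈ T})
    (y : GIdx s r T F w) :
    iotaMap s r T F M w (Sum.inr u) y = 0 := by
  rcases y with ⟨e, b⟩ | u' <;> rfl

lemma iota_apply_inr_right (M : ∀ v, Matrix (F v) (F v) ℂ) (w : W) (x : GIdx s r T F w)
    (u : {_u : Unit // w ∈ T}) :
    iotaMap s r T F M w x (Sum.inr u) = 0 := by
  rcases x with ⟨e, a⟩ | u' <;> rfl

lemma mul_iota_apply (x : ∀ w, Matrix (GIdx s r T F w) (GIdx s r T F w) ℂ)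
    (M : ∀ v, Matrix (F v) (F v) ℂ) (w : W) (i : GIdx s r T F w)
    (e : {e : E // r e = w}) (b : F (s e.1)) :
    (x w * iotaMap s r T F M w) i (Sum.inl ⟨e, b⟩)
      = ∑ c : F (s e.1), x w i (Sum.inl ⟨e, c⟩) * M (s e.1) c b := by
  rw [Matrix.mul_apply, Fintype.sum_sum_type]
  have h2 : ∑ u : {_u : Unit // w ∈ T},
      x w i (Sum.inr u) * iotaMap s r T F M w (Sum.inr u) (Sum.inl ⟨e, b⟩) = 0 := by
    simp [iota_apply_inr_left]
  rw [h2, add_zero, ← Finset.univ_sigma_univ, Finset.sum_sigma]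
  rw [Finset.sum_eq_single e]
  · exact Finset.sum_congr rfl fun c _ => by rw [iota_apply_eq]
  · intro e' _ hne
    exact Finset.sum_eq_zero fun c _ => by rw [iota_apply_ne s r T F M w e' e hne, mul_zero]
  · intro h; exact absurd (Finset.mem_univ e) h

lemma iota_mul_apply (x : ∀ w, Matrix (GIdx s r T F w) (GIdx s r T F w) ℂ)
    (M : ∀ v, Matrix (F v) (F v) ℂ) (w : W) (j : GIdx s r T F w)
    (e : {e : E // r e = w}) (a : F (s e.1)) :
    (iotaMap s r T F M w * x w) (Sum.inl ⟨e, a⟩) j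
      = ∑ c : F (s e.1), M (s e.1) a c * x w (Sum.inl ⟨e, c⟩) j := by
  rw [Matrix.mul_apply, Fintype.sum_sum_type]
  have h2 : ∑ u : {_u : Unit // w ∈ T},
      iotaMap s r T F M w (Sum.inl ⟨e, a⟩) (Sum.inr u) * x w (Sum.inr u) j = 0 := by
    simp [iota_apply_inr_right]
  rw [h2, add_zero, ← Finset.univ_sigma_univ, Finset.sum_sigma]
  rw [Finset.sum_eq_single e]
  · exact Finset.sum_congr rfl fun c _ => by rw [iota_apply_eq]
  · intro e' _ hne
    exact Finset.sum_eq_zero fun c _ => by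
      rw [iota_apply_ne s r T F M w e e' (Ne.symm hne), zero_mul]
  · intro h; exact absurd (Finset.mem_univ e) h
end Aux

/-- With `A = Π v, M_{F v}(ℂ)`, `B = Π w, M_{G w}(ℂ)`, the embedding `ι` and
the subspace `D` as above, `D` is an abelian `*`-subalgebra of `B`, and `D` is maximal abelian
in the relative commutant of `ι(A)` in `B`: any `x ∈ B` commuting with every `ι M` and with
every element of `D` lies in `D`. -/
theorem diagSubmodule_is_masa_in_relative_commutant
    {V W E : Type*} [Fintype V] [Fintype W] [Fintype E]
    [DecidableEq V] [DecidableEq W] [DecidableEq E]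
    (s : E → V) (r : E → W) (T : Set W) [DecidablePred (· ∈ T)]
    (F : V → Type*) [∀ v, Fintype (F v)] [∀ v, DecidableEq (F v)] [∀ v, Nonempty (F v)] :
    (∀ x ∈ diagSubmodule s r T F, star x ∈ diagSubmodule s r T F) ∧
    (∀ x ∈ diagSubmodule s r T F, ∀ y ∈ diagSubmodule s r T F,
      x * y ∈ diagSubmodule s r T F) ∧
    (∀ x ∈ diagSubmodule s r T F, ∀ y ∈ diagSubmodule s r T F, x * y = y * x) ∧
    (∀ x : ∀ w, Matrix (GIdx s r T F w) (GIdx s r T F w) ℂ,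
      (∀ M : ∀ v, Matrix (F v) (F v) ℂ,
        x * iotaMap s r T F M = iotaMap s r T F M * x) →
      (∀ y ∈ diagSubmodule s r T F, x * y = y * x) →
      x ∈ diagSubmodule s r T F) := by
  refine ⟨?_, ?_, ?_, ?_⟩
  · intro x hx
    refine Submodule.span_induction ?_ ?_ ?_ ?_ hx
    · rintro y (⟨e, rfl⟩ | ⟨w₀, hw₀, rfl⟩)
      · rw [star_fEdge]; exact fEdge_mem s r T F e
      · rw [star_fVert]; exact fVert_mem s r T F hw₀
    · rw [star_zero]; exact Submodule.zero_mem _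
    · intro a b _ _ ha hb; rw [star_add]; exact Submodule.add_mem _ ha hb
    · intro t a _ ha; rw [star_smul]; exact Submodule.smul_mem _ _ ha
  · intro x hx
    refine Submodule.span_induction
      (p := fun x _ => ∀ y ∈ diagSubmodule s r T F, x * y ∈ diagSubmodule s r T F)
      ?_ ?_ ?_ ?_ hx
    · rintro g (⟨e, rfl⟩ | ⟨w₀, hw₀, rfl⟩) <;> intro y hy <;>
        refine Submodule.span_induction
          (p := fun y _ => _ * y ∈ diagSubmodule s r T F) ?_ ?_ ?_ ?_ hy
      · rintro z (⟨e', rfl⟩ | ⟨w₁, hw₁, rfl⟩)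
        · simp only []
          rw [fEdge_mul_fEdge]
          split_ifs
          · exact fEdge_mem s r T F e
          · exact Submodule.zero_mem _
        · simp only []
          rw [fEdge_mul_fVert]; exact Submodule.zero_mem _
      · simp only [mul_zero]; exact Submodule.zero_mem _
      · intro a b _ _ ha hb; simp only [mul_add]; exact Submodule.add_mem _ ha hb
      · intro t a _ ha; simp only [mul_smul_comm]; exact Submodule.smul_mem _ _ ha
      · rintro z (⟨e', rfl⟩ | ⟨w₁, hw₁, rfl⟩)
        · simp only []
          rw [fVert_mul_fEdge]; exact Submodule.zero_mem _
        · simp only []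
          rw [fVert_mul_fVert]
          split_ifs
          · exact fVert_mem s r T F hw₀
          · exact Submodule.zero_mem _
      · simp only [mul_zero]; exact Submodule.zero_mem _
      · intro a b _ _ ha hb; simp only [mul_add]; exact Submodule.add_mem _ ha hb
      · intro t a _ ha; simp only [mul_smul_comm]; exact Submodule.smul_mem _ _ ha
    · intro y _; rw [zero_mul]; exact Submodule.zero_mem _
    · intro a b _ _ ha hb y hy; rw [add_mul]
      exact Submodule.add_mem _ (ha y hy) (hb y hy)
    · intro t a _ ha y hy; rw [smul_mul_assoc]
      exact Submodule.smul_mem _ _ (ha y hy)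
  · intro x hx y hy
    obtain ⟨p, rfl⟩ := mem_diag s r T F hx
    obtain ⟨q, rfl⟩ := mem_diag s r T F hy
    funext w
    simp only [Pi.mul_apply]
    rw [Matrix.diagonal_mul_diagonal, Matrix.diagonal_mul_diagonal]
    exact congrArg Matrix.diagonal (funext fun z => mul_comm _ _)
  · intro x hι hD
    have hent : ∀ (M : ∀ v, Matrix (F v) (F v) ℂ) (w : W) (i j : GIdx s r T F w),
        (x w * iotaMap s r T F M w) i j = (iotaMap s r T F M w * x w) i j := by
      intro M w i j
      have h := congrFun (hι M) w
      rw [Pi.mul_apply, Pi.mul_apply] at h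
      rw [h]
    have hdiag : ∀ (w : W) (e : {e : E // r e = w}) (a b : F (s e.1)),
        x w (Sum.inl ⟨e, a⟩) (Sum.inl ⟨e, a⟩) = x w (Sum.inl ⟨e, b⟩) (Sum.inl ⟨e, b⟩) := by
      intro w e a b
      have h := hent (Pi.single (s e.1) (Matrix.single a b 1)) w
        (Sum.inl ⟨e, a⟩) (Sum.inl ⟨e, b⟩)
      rw [mul_iota_apply, iota_mul_apply] at h
      simpa [Matrix.single, Matrix.of_apply, mul_ite, ite_and,
        Finset.sum_ite_eq, Finset.sum_ite_eq'] using h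
    have hoff : ∀ (w : W) (e : {e : E // r e = w}) (a b : F (s e.1)), a ≠ b →
        x w (Sum.inl ⟨e, a⟩) (Sum.inl ⟨e, b⟩) = 0 := by
      intro w e a b hab
      have h := hent (Pi.single (s e.1) (Matrix.single b b 1)) w
        (Sum.inl ⟨e, a⟩) (Sum.inl ⟨e, b⟩)
      rw [mul_iota_apply, iota_mul_apply] at h
      simpa [Matrix.single, Matrix.of_apply, mul_ite, ite_and,
        Finset.sum_ite_eq, Finset.sum_ite_eq', Ne.symm hab] using h
    have hcross : ∀ (w : W) (e₁ e₂ : {e : E // r e = w}) (a : F (s e₁.1)) (b : F (s e₂.1)),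
        e₁ ≠ e₂ → x w (Sum.inl ⟨e₁, a⟩) (Sum.inl ⟨e₂, b⟩) = 0 := by
      intro w e₁ e₂ a b hne
      have hc := hD _ (fEdge_mem s r T F e₂.1)
      have h := congrFun hc w
      rw [Pi.mul_apply, Pi.mul_apply] at h
      have h2 := Matrix.ext_iff.mpr h (Sum.inl ⟨e₁, a⟩) (Sum.inl ⟨e₂, b⟩)
      rw [fEdge_eq_diagonal, Matrix.mul_diagonal, Matrix.diagonal_mul] at h2
      have hv : e₁.1 ≠ e₂.1 := fun hh => hne (Subtype.ext hh)
      simpa [hv] using h2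
    have hmixl : ∀ (w : W) (e₁ : {e : E // r e = w}) (a : F (s e₁.1))
        (u : {_u : Unit // w ∈ T}), x w (Sum.inl ⟨e₁, a⟩) (Sum.inr u) = 0 := by
      intro w e₁ a u
      have hc := hD _ (fVert_mem s r T F u.2)
      have h := congrFun hc w
      rw [Pi.mul_apply, Pi.mul_apply] at h
      have h2 := Matrix.ext_iff.mpr h (Sum.inl ⟨e₁, a⟩) (Sum.inr u)
      rw [fVert_eq_diagonal, Matrix.mul_diagonal, Matrix.diagonal_mul] at h2
      simpa using h2
    have hmixr : ∀ (w : W) (e₁ : {e : E // r e = w}) (a : F (s e₁.1))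
        (u : {_u : Unit // w ∈ T}), x w (Sum.inr u) (Sum.inl ⟨e₁, a⟩) = 0 := by
      intro w e₁ a u
      have hc := hD _ (fVert_mem s r T F u.2)
      have h := congrFun hc w
      rw [Pi.mul_apply, Pi.mul_apply] at h
      have h2 := Matrix.ext_iff.mpr h (Sum.inr u) (Sum.inl ⟨e₁, a⟩)
      rw [fVert_eq_diagonal, Matrix.mul_diagonal, Matrix.diagonal_mul] at h2
      simpa using h2.symm
    have key : x = (∑ e : E,
          (x (r e) (Sum.inl ⟨⟨e, rfl⟩, Classical.arbitrary (F (s e))⟩)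
            (Sum.inl ⟨⟨e, rfl⟩, Classical.arbitrary (F (s e))⟩)) • fEdge s r T F e)
        + ∑ w₀ ∈ Finset.univ.filter (· ∈ T),
          (if hw : w₀ ∈ T then x w₀ (Sum.inr ⟨(), hw⟩) (Sum.inr ⟨(), hw⟩) else 0) •
            fVert s r T F w₀ := by
      funext w
      ext i j
      simp only [Pi.add_apply, Finset.sum_apply, Matrix.add_apply, Matrix.sum_apply,
        Pi.smul_apply, Matrix.smul_apply, smul_eq_mul]
      rcases i with ⟨e₁, a⟩ | u₁ <;> rcases j with ⟨e₂, b⟩ | u₂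
      · by_cases hee : e₁ = e₂
        · subst hee
          by_cases hab : a = b
          · subst hab
            obtain ⟨e, he⟩ := e₁
            subst he
            rw [hdiag (r e) ⟨e, rfl⟩ a (Classical.arbitrary (F (s e)))]
            simp [fEdge_eq_diagonal, Matrix.diagonal_apply, fVert, mul_ite,
              Finset.sum_ite_eq]
          · rw [hoff w e₁ a b hab]
            simp [fEdge_eq_diagonal, Matrix.diagonal_apply, fVert, hab]
        · rw [hcross w e₁ e₂ a b hee]
          simp [fEdge_eq_diagonal, Matrix.diagonal_apply, fVert, hee]
      · rw [hmixl w e₁ a u₂]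
        simp [fEdge_eq_diagonal, Matrix.diagonal_apply, fVert]
      · rw [hmixr w e₂ b u₁]
        simp [fEdge_eq_diagonal, Matrix.diagonal_apply, fVert]
      · obtain ⟨⟨⟩, hu⟩ := u₁
        obtain rfl : u₂ = ⟨(), hu⟩ := Subsingleton.elim _ _
        simp [fEdge_eq_diagonal, Matrix.diagonal_apply, fVert, mul_ite,
          Finset.sum_ite_eq, Finset.mem_filter, hu]
    rw [key]
    refine Submodule.add_mem _ ?_ ?_
    · exact Submodule.sum_mem _ fun e _ => Submodule.smul_mem _ _ (fEdge_mem s r T F e)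
    · refine Submodule.sum_mem _ fun w₀ hw₀ => Submodule.smul_mem _ _ (fVert_mem s r T F ?_)
      exact (Finset.mem_filter.1 hw₀).2
end
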